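/- arXiv:1809.10174 — 4 statements merged into one kernel-verified Lean document; each statement's English description precedes it below -/
import Mathlib

section
/- Let (X,x₀) be a pointed path-connected space and f : X → X a continuous map with f(x₀) = x₀. Then cat(X) ≤ TC^{(f, const_{x₀}, X)}(X) ≤ TC(X). -/
open unitInterval Set

/-- A `k`-fold open cover of `A ⊆ X × X` by sets admitting continuous choices of paths
from the first to the second coordinate. -/
def SecCover {X : Type*} [TopologicalSpace X] (A : Set (X × X)) (k : ℕ) : Prop :=
  ∃ U : Fin k → Set A, (∀ i, IsOpen (U i)) ∧ (⋃ i, U i) = Set.univ ∧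
    ∀ i, ∃ s : C(U i, C(unitInterval, X)),
      ∀ p : U i, s p 0 = ((p : A) : X × X).1 ∧ s p 1 = ((p : A) : X × X).2

/-- Relative topological complexity `TC_X(A)`. -/
noncomputable def relTC {X : Type*} [TopologicalSpace X] (A : Set (X × X)) : ℕ∞ :=
  sInf {n : ℕ∞ | ∃ k : ℕ, n = k ∧ SecCover A k}

/-- Lusternik–Schnirelmann category. -/
noncomputable def lsCat (X : Type*) [TopologicalSpace X] : ℕ∞ :=
  sInf {n : ℕ∞ | ∃ k : ℕ, n = k ∧ ∃ U : Fin k → Set X,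
    (∀ i, IsOpen (U i)) ∧ (⋃ i, U i) = Set.univ ∧
    ∀ i, ∃ x₀ : X, ContinuousMap.Homotopic
      ⟨Subtype.val, continuous_subtype_val⟩
      (ContinuousMap.const (U i) x₀)}

/-- Fiber product of `f` and `g`. -/
def fiberProd {X Z : Type*} (f g : X → Z) : Set (X × X) := {p | f p.1 = g p.2}

theorem cat_le_tc_fiber_le_tc {X : Type*} [TopologicalSpace X] [PathConnectedSpace X]
    (x₀ : X) (f : X → X) (hf : Continuous f) (hfx₀ : f x₀ = x₀) :
    lsCat X ≤ relTC (fiberProd f (fun _ : X => x₀)) ∧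
      relTC (fiberProd f (fun _ : X => x₀)) ≤ relTC (Set.univ : Set (X × X)) := by
  set A : Set (X × X) := fiberProd f (fun _ : X => x₀) with hA
  constructor
  · -- lsCat X ≤ relTC A
    apply le_sInf
    rintro n ⟨k, rfl, U, hopen, hcover, hsec⟩
    apply sInf_le
    refine ⟨k, rfl, ?_⟩
    -- embedding y ↦ (x₀, y) into A
    have hmem : ∀ y : X, ((x₀, y) : X × X) ∈ A := fun y => hfx₀
    let e : X → A := fun y => ⟨(x₀, y), hmem y⟩
    have he : Continuous e :=
      Continuous.subtype_mk (continuous_const.prodMk continuous_id) _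
    refine ⟨fun i => e ⁻¹' (U i), fun i => (hopen i).preimage he, ?_, ?_⟩
    · ext y
      simp only [Set.mem_iUnion, Set.mem_preimage, Set.mem_univ, iff_true]
      have : e y ∈ ⋃ i, U i := by rw [hcover]; trivial
      simpa using this
    · intro i
      obtain ⟨s, hs⟩ := hsec i
      refine ⟨x₀, ?_⟩
      -- map W i → U i
      let g : C((e ⁻¹' (U i) : Set X), (U i : Set A)) :=
        ⟨fun y => ⟨e y.1, y.2⟩, Continuous.subtype_mk (he.comp continuous_subtype_val) _⟩
      have hF : Continuous fun p : unitInterval × (e ⁻¹' (U i) : Set X) =>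
          (s (g p.2)) (unitInterval.symm p.1) := by
        exact ContinuousEval.continuous_eval.comp
          (((s.continuous.comp g.continuous).comp continuous_snd).prodMk
            (unitInterval.continuous_symm.comp continuous_fst))
      refine ⟨⟨⟨fun p => (s (g p.2)) (unitInterval.symm p.1), hF⟩, ?_, ?_⟩⟩
      · intro y
        have := (hs (g y)).2
        simpa [g, e] using this
      · intro y
        have := (hs (g y)).1
        simpa [g, e] using this
  · -- relTC A ≤ relTC univ
    apply le_sInf
    rintro n ⟨k, rfl, U, hopen, hcover, hsec⟩
    apply sInf_le
    refine ⟨k, rfl, ?_⟩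
    let e : A → (Set.univ : Set (X × X)) := fun a => ⟨a.1, Set.mem_univ _⟩
    have he : Continuous e := Continuous.subtype_mk continuous_subtype_val _
    refine ⟨fun i => e ⁻¹' (U i), fun i => (hopen i).preimage he, ?_, ?_⟩
    · ext a
      simp only [Set.mem_iUnion, Set.mem_preimage, Set.mem_univ, iff_true]
      have : e a ∈ ⋃ i, U i := by rw [hcover]; trivial
      simpa using this
    · intro i
      obtain ⟨s, hs⟩ := hsec i
      let g : C((e ⁻¹' (U i) : Set A), (U i : Set (Set.univ : Set (X × X)))) :=
        ⟨fun p => ⟨e p.1, p.2⟩, Continuous.subtype_mk (he.comp continuous_subtype_val) _⟩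
      refine ⟨s.comp g, fun p => ?_⟩
      have := hs (g p)
      simpa [g, e] using this
end

section
/- For any path-connected space X and continuous maps f, g : X → Z, the fibered loop topological complexity equals the fibered topological complexity: TC_{LP}^{(f,g,Z)}(X) = TC^{(f,g,Z)}(X). -/
open unitInterval Set

/-- A `k`-fold open cover of `A` by sets admitting continuous loop sections:
loops based at the first coordinate passing through the second at time `1/2`. -/
def LoopSecCover {X : Type*} [TopologicalSpace X] (A : Set (X × X)) (k : ℕ) : Prop :=
  ∃ U : Fin k → Set A, (∀ i, IsOpen (U i)) ∧ (⋃ i, U i) = Set.univ ∧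
    ∀ i, ∃ s : C(U i, C(unitInterval, X)),
      ∀ p : U i, s p 0 = ((p : A) : X × X).1 ∧ s p 1 = ((p : A) : X × X).1 ∧
        s p ⟨1/2, by norm_num, by norm_num⟩ = ((p : A) : X × X).2

/-- The fibered loop topological complexity. -/
noncomputable def loopTC {X : Type*} [TopologicalSpace X] (A : Set (X × X)) : ℕ∞ :=
  sInf {n : ℕ∞ | ∃ k : ℕ, n = k ∧ LoopSecCover A k}

/-! A loop based at `x` that passes through `y` at time `1/2` gives, by its first half, a path from
`x` to `y`; conversely a path `γ` from `x` to `y` gives the loop `γ ⬝ γ⁻¹`. Both constructions are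
continuous in parameters, so loop sections and path sections exist over the same open sets, for any
`A ⊆ X × X`. -/

theorem Path.trans_apply_half {X : Type*} [TopologicalSpace X] {x y z : X} (γ : Path x y)
    (γ' : Path y z) : γ.trans γ' ⟨1/2, by norm_num, by norm_num⟩ = y := by
  simp [Path.trans_apply]

section PathFamilies

variable {U X : Type*} [TopologicalSpace U] [TopologicalSpace X]

lemma exists_path_family_of_loop_family {a b : U → X} (s : C(U, C(I, X)))
    (hs₀ : ∀ p, s p 0 = a p) (hs_half : ∀ p, s p ⟨1/2, by norm_num, by norm_num⟩ = b p) :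
    ∃ s' : C(U, C(I, X)), ∀ p, s' p 0 = a p ∧ s' p 1 = b p := by
  set half : I := ⟨1/2, by norm_num, by norm_num⟩
  refine ⟨(ContinuousMap.compRightContinuousMap X ⟨(half * ·), by fun_prop⟩).comp s,
    fun p => ⟨?_, ?_⟩⟩
  · simpa using hs₀ p
  · simpa using hs_half p

lemma exists_loop_family_of_path_family {a b : U → X} (s : C(U, C(I, X)))
    (hs₀ : ∀ p, s p 0 = a p) (hs₁ : ∀ p, s p 1 = b p) :
    ∃ l : C(U, C(I, X)), ∀ p, l p 0 = a p ∧ l p 1 = a p ∧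
      l p ⟨1/2, by norm_num, by norm_num⟩ = b p := by
  let γ : ∀ p, Path (a p) (b p) := fun p => ⟨s p, hs₀ p, hs₁ p⟩
  have hγ : Continuous ↿γ :=
    continuous_eval.comp ((s.continuous.comp continuous_fst).prodMk continuous_snd)
  let loop : ∀ p, Path (a p) (a p) := fun p => (γ p).trans (γ p).symm
  have hloop : Continuous ↿loop :=
    Path.trans_continuous_family γ hγ _ (Path.symm_continuous_family γ hγ)
  exact ⟨ContinuousMap.curry ⟨↿loop, hloop⟩,
    fun p => ⟨(loop p).source, (loop p).target, Path.trans_apply_half _ _⟩⟩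

end PathFamilies

lemma loopSecCover_iff_secCover {X : Type*} [TopologicalSpace X] (A : Set (X × X)) (k : ℕ) :
    LoopSecCover A k ↔ SecCover A k := by
  refine exists_congr fun _ => and_congr_right fun _ => and_congr_right fun _ =>
    forall_congr' fun _ => ⟨fun ⟨s, hs⟩ => ?_, fun ⟨s, hs⟩ => ?_⟩
  · exact exists_path_family_of_loop_family s (fun p => (hs p).1) (fun p => (hs p).2.2)
  · exact exists_loop_family_of_path_family s (fun p => (hs p).1) (fun p => (hs p).2)

lemma loopTC_eq_relTC {X : Type*} [TopologicalSpace X] (A : Set (X × X)) :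
    loopTC A = relTC A := by
  simp only [loopTC, relTC, loopSecCover_iff_secCover]

theorem loopTC_eq_tc_fiber_general {X Z : Type*} [TopologicalSpace X] (f g : X → Z) :
    loopTC (fiberProd f g) = relTC (fiberProd f g) :=
  loopTC_eq_relTC _

theorem loopTC_eq_tc_fiber {X Z : Type*} [TopologicalSpace X] [TopologicalSpace Z]
    [PathConnectedSpace X] (f g : X → Z) (hf : Continuous f) (hg : Continuous g) :
    loopTC (fiberProd f g) = relTC (fiberProd f g) :=
  loopTC_eq_tc_fiber_general f g
end

section
/- Let f₁, f₂ : X → Z be continuous maps on a path-connected space X such that {(x,y) : f₁(x) = f₁(y)} ⊆ {(x,y) : f₂(x) = f₂(y)}. Then TC(f₁) ≤ TC(f₂). -/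
open unitInterval Set

lemma SecCover.mono {X : Type*} [TopologicalSpace X] {A B : Set (X × X)} (hAB : A ⊆ B)
    {k : ℕ} (hB : SecCover B k) : SecCover A k := by
  obtain ⟨U, hopen, hcov, hsec⟩ := hB
  refine ⟨fun i => Set.inclusion hAB ⁻¹' U i, fun i => (hopen i).preimage (continuous_inclusion hAB),
    ?_, fun i => ?_⟩
  · ext p
    simp only [Set.mem_iUnion, Set.mem_preimage, Set.mem_univ, iff_true]
    have := hcov ▸ Set.mem_univ (Set.inclusion hAB p)
    simpa [Set.mem_iUnion] using this
  · obtain ⟨s, hs⟩ := hsec i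
    refine ⟨s.comp ⟨fun p => ⟨Set.inclusion hAB p, p.2⟩,
      (Continuous.subtype_mk ((continuous_inclusion hAB).comp continuous_subtype_val) _)⟩,
      fun p => ?_⟩
    exact hs ⟨Set.inclusion hAB p, p.2⟩

theorem tc_map_mono {X Z : Type*} [TopologicalSpace X] [TopologicalSpace Z]
    [PathConnectedSpace X] (f₁ f₂ : X → Z) (hf₁ : Continuous f₁) (hf₂ : Continuous f₂)
    (h : fiberProd f₁ f₁ ⊆ fiberProd f₂ f₂) :
    relTC (fiberProd f₁ f₁) ≤ relTC (fiberProd f₂ f₂) := by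
  refine sInf_le_sInf ?_
  rintro n ⟨k, rfl, hk⟩
  exact ⟨k, rfl, hk.mono h⟩
end

section
/- Let X be a path-connected space, Z a space, and f, g : X → Z continuous. Suppose the fiber product A = {(x,y) : f(x) = g(y)} satisfies A ⊆ B ⊆ X × X for some subspace B such that the inclusion B ↪ X × X is homotopic (as a map B → X × X) to a map taking values in A. Then TC^{(f,g,Z)}(X) = TC_X(B). -/
open unitInterval Set

/-- A subset inherits sectional covers. -/
lemma secCover_of_subset {X : Type*} [TopologicalSpace X] {A B : Set (X × X)} (hAB : A ⊆ B)
    {k : ℕ} (h : SecCover B k) : SecCover A k := by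
  obtain ⟨U, hUo, hUc, hUs⟩ := h
  refine ⟨fun i => Set.inclusion hAB ⁻¹' U i,
    fun i => (hUo i).preimage (continuous_inclusion hAB), ?_, fun i => ?_⟩
  · ext a
    simp only [Set.mem_iUnion, Set.mem_preimage, Set.mem_univ, iff_true]
    have : Set.inclusion hAB a ∈ ⋃ i, U i := hUc ▸ Set.mem_univ _
    simpa using this
  · obtain ⟨s, hs⟩ := hUs i
    refine ⟨s.comp ⟨fun a => ⟨Set.inclusion hAB a, a.2⟩,
      Continuous.subtype_mk ((continuous_inclusion hAB).comp continuous_subtype_val) _⟩,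
      fun p => ?_⟩
    exact hs ⟨Set.inclusion hAB p, p.2⟩

/-- If the inclusion of `B` deforms into `A ⊆ B`, sectional covers transfer from `A` to `B`. -/
lemma secCover_of_deformation {X : Type*} [TopologicalSpace X] {A B : Set (X × X)}
    (r : C(B, X × X)) (hr : ∀ b : B, r b ∈ A)
    (hhom : ContinuousMap.Homotopic (⟨Subtype.val, continuous_subtype_val⟩ : C(B, X × X)) r)
    {k : ℕ} (h : SecCover A k) : SecCover B k := by
  obtain ⟨U, hUo, hUc, hUs⟩ := h
  obtain ⟨H⟩ := hhom
  set ρ : C(B, A) := ⟨fun b => ⟨r b, hr b⟩, r.continuous.subtype_mk _⟩ with hρ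
  refine ⟨fun i => ρ ⁻¹' U i, fun i => (hUo i).preimage ρ.continuous, ?_, fun i => ?_⟩
  · ext b
    simp only [Set.mem_iUnion, Set.mem_preimage, Set.mem_univ, iff_true]
    have : ρ b ∈ ⋃ i, U i := hUc ▸ Set.mem_univ _
    simpa using this
  · obtain ⟨s, hs⟩ := hUs i
    -- continuous map from `V := ρ ⁻¹' U i` to `U i`
    set V : Set B := ρ ⁻¹' U i
    set ρ' : C(V, U i) := ⟨fun v => ⟨ρ v, v.2⟩,
      Continuous.subtype_mk (ρ.continuous.comp continuous_subtype_val) _⟩ with hρ'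
    -- path families
    set hγ₁ : ∀ v : V, Path (((v : B) : X × X).1) ((r (v : B)).1) := fun v =>
      { toFun := fun t => (H (t, (v : B))).1
        continuous_toFun := (H.continuous.comp (by fun_prop)).fst
        source' := by simp
        target' := by simp }
    set hγ₂ : ∀ v : V, Path (((v : B) : X × X).2) ((r (v : B)).2) := fun v =>
      { toFun := fun t => (H (t, (v : B))).2
        continuous_toFun := (H.continuous.comp (by fun_prop)).snd
        source' := by simp
        target' := by simp }
    set hmid : ∀ v : V, Path ((r (v : B)).1) ((r (v : B)).2) := fun v =>
      { toContinuousMap := s (ρ' v)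
        source' := (hs (ρ' v)).1
        target' := (hs (ρ' v)).2 }
    have hc₁ : Continuous ↿hγ₁ := by
      have : Continuous fun p : V × unitInterval => (H (p.2, (p.1 : B))).1 :=
        (H.continuous.comp (by fun_prop)).fst
      exact this
    have hc₂ : Continuous ↿hγ₂ := by
      have : Continuous fun p : V × unitInterval => (H (p.2, (p.1 : B))).2 :=
        (H.continuous.comp (by fun_prop)).snd
      exact this
    have hcm : Continuous ↿hmid := by
      have : Continuous fun p : V × unitInterval => s (ρ' p.1) p.2 := by
        have h1 : Continuous fun p : V × unitInterval => (s (ρ' p.1), p.2) :=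
          ((s.continuous.comp ρ'.continuous).comp continuous_fst).prodMk continuous_snd
        exact ContinuousEval.continuous_eval.comp h1
      exact this
    set γ : ∀ v : V, Path (((v : B) : X × X).1) (((v : B) : X × X).2) :=
      fun v => ((hγ₁ v).trans (hmid v)).trans (hγ₂ v).symm with hγdef
    have hcγ : Continuous ↿γ :=
      Path.trans_continuous_family _
        (Path.trans_continuous_family _ hc₁ _ hcm) _
        (Path.symm_continuous_family _ hc₂)
    refine ⟨ContinuousMap.curry ⟨fun p : V × unitInterval => γ p.1 p.2, hcγ⟩, fun p => ?_⟩
    constructor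
    · exact (γ p).source
    · exact (γ p).target

theorem tc_fiber_eq_relTC_of_deformation {X Z : Type*} [TopologicalSpace X] [TopologicalSpace Z]
    [PathConnectedSpace X] (f g : X → Z) (hf : Continuous f) (hg : Continuous g)
    (B : Set (X × X)) (hAB : fiberProd f g ⊆ B)
    (r : C(B, X × X)) (hr : ∀ b : B, r b ∈ fiberProd f g)
    (hhom : ContinuousMap.Homotopic (⟨Subtype.val, continuous_subtype_val⟩ : C(B, X × X)) r) :
    relTC (fiberProd f g) = relTC B := by
  unfold relTC
  congr 1
  ext n
  constructor
  · rintro ⟨k, rfl, h⟩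
    exact ⟨k, rfl, secCover_of_deformation r hr hhom h⟩
  · rintro ⟨k, rfl, h⟩
    exact ⟨k, rfl, secCover_of_subset hAB h⟩
end
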